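/- arXiv:2204.05382 — 3 statements merged into one kernel-verified Lean document; each statement's English description precedes it below -/
import Mathlib

section
/- Let c_n, c_s > 0, d, h, φ, ū ≥ 0 and suppose c_n c_s > d h φ²(1 + 2/c_n) + d ū. Then the 2×2 matrix J = [[d(hφ² + ū)/c_s − c_n , d φ/c_n],[2hφ , −c_s]] is Hurwitz. -/
/-- A real square matrix is Hurwitz if every eigenvalue (element of the complex spectrum)
has strictly negative real part. -/
def IsHurwitz {k : ℕ} (A : Matrix (Fin k) (Fin k) ℝ) : Prop :=
  ∀ z ∈ spectrum ℂ (A.map Complex.ofReal), z.re < 0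

/-! A 2×2 matrix with negative trace and positive determinant is Hurwitz, since each root of
`z² - T z + D` is either real (then negative, as all coefficients are positive) or one of a
conjugate pair with real part `T / 2`. The hypothesis makes the determinant of `J` equal to
`c_n c_s - d h φ² (1 + 2/c_n) - d ū > 0`, and, as the coupling term `2 d h φ² / c_n` is
nonnegative, it also bounds `d (h φ² + ū) / c_s` below `c_n`, so the trace is negative. -/

theorem Matrix.sq_sub_trace_mul_add_det_eq_zero_of_mem_spectrum_map {R K : Type*} [CommRing R]
    [Field K] (f : R →+* K) {A : Matrix (Fin 2) (Fin 2) R} {z : K}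
    (hz : z ∈ spectrum K (A.map f)) : z ^ 2 - f A.trace * z + f A.det = 0 := by
  rw [Matrix.mem_spectrum_iff_isRoot_charpoly, Matrix.charpoly_fin_two] at hz
  simpa [Matrix.trace_fin_two, Matrix.det_fin_two] using hz

theorem Complex.re_neg_of_sq_sub_mul_add_eq_zero {T D : ℝ} (hT : T < 0) (hD : 0 < D) {z : ℂ}
    (hz : z ^ 2 - T * z + D = 0) : z.re < 0 := by
  have hre : z.re ^ 2 - z.im ^ 2 - T * z.re + D = 0 := by
    simpa [sq] using congrArg Complex.re hz
  have him : (2 * z.re - T) * z.im = 0 := by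
    have := congrArg Complex.im hz
    simp only [sq, add_im, sub_im, mul_im, ofReal_re, ofReal_im, zero_mul, add_zero,
      zero_im] at this
    linear_combination this
  rcases mul_eq_zero.1 him with hpair | hreal
  · linarith
  · nlinarith

theorem isHurwitz_fin_two_of_trace_neg_of_det_pos {A : Matrix (Fin 2) (Fin 2) ℝ}
    (htr : A.trace < 0) (hdet : 0 < A.det) : IsHurwitz A := fun _ hz =>
  Complex.re_neg_of_sq_sub_mul_add_eq_zero htr hdet
    (A.sq_sub_trace_mul_add_det_eq_zero_of_mem_spectrum_map Complex.ofRealHom hz)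

theorem firing_rate_hebbian_hurwitz_general
    (cn cs d h φ ub : ℝ) (hcn : 0 < cn) (hcs : 0 < cs)
    (hd : 0 ≤ d) (hh : 0 ≤ h)
    (hcond : cn * cs > d * h * φ ^ 2 * (1 + 2 / cn) + d * ub) :
    IsHurwitz !![d * (h * φ ^ 2 + ub) / cs - cn, d * φ / cn; 2 * h * φ, -cs] := by
  have hcoupling : 0 ≤ d * h * φ ^ 2 * (2 / cn) := by positivity
  apply isHurwitz_fin_two_of_trace_neg_of_det_pos
  · rw [Matrix.trace_fin_two_of]
    have : d * (h * φ ^ 2 + ub) / cs < cn := by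
      rw [div_lt_iff₀ hcs]
      linarith
    linarith
  · rw [Matrix.det_fin_two_of]
    calc (0 : ℝ) < cn * cs - (d * h * φ ^ 2 * (1 + 2 / cn) + d * ub) := by linarith
      _ = _ := by field_simp; ring

/-- The aggregate Metzler majorant bound for the Jacobian of the firing-rate-Hebbian model:
if c_n c_s > d h φ²(1 + 2/c_n) + d ū then
J = [[d(hφ²+ū)/c_s − c_n, dφ/c_n],[2hφ, −c_s]] is Hurwitz. -/
theorem firing_rate_hebbian_hurwitz
    (cn cs d h φ ub : ℝ) (hcn : 0 < cn) (hcs : 0 < cs)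
    (hd : 0 ≤ d) (hh : 0 ≤ h) (hφ : 0 ≤ φ) (hub : 0 ≤ ub)
    (hcond : cn * cs > d * h * φ ^ 2 * (1 + 2 / cn) + d * ub) :
    IsHurwitz !![d * (h * φ ^ 2 + ub) / cs - cn, d * φ / cn; 2 * h * φ, -cs] :=
  firing_rate_hebbian_hurwitz_general cn cs d h φ ub hcn hcs hd hh hcond
end

section
/- Let A ∈ ℝ^{n×n} be block partitioned with blocks A_{ij} ∈ ℝ^{n_i × n_j} (Σ n_i = n), equip each ℝ^{n_i} with a norm ‖·‖_i, and let ⌈A⌉_agg ∈ ℝ^{r×r} be the aggregate Metzler majorant with (⌈A⌉_agg)_{ii} = μ_i(A_{ii}) and (⌈A⌉_agg)_{ij} = ‖A_{ij}‖_{ij} for i ≠ j, where ‖A_{ij}‖_{ij} is the induced operator norm from ‖·‖_j to ‖·‖_i and μ_i the logarithmic norm induced by ‖·‖_i. If ⌈A⌉_agg is Hurwitz, then A is Hurwitz. -/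
/-!
Suppose `A v = z v` with `v ≠ 0` and `Re z ≥ 0`, and measure the block `vᵢ` of `v` by the
complexified norm `ξᵢ = sup_{|w| = 1} Nᵢ (Re (w vᵢ))`. This is a complex seminorm, so the
`i`-th block row of `(1 + h A) v = (1 + h z) v` gives
`(1 + h Re z) ξᵢ ≤ |1 + h z| ξᵢ ≤ ‖1 + h Aᵢᵢ‖ ξᵢ + h ∑_{j ≠ i} ‖Aᵢⱼ‖ ξⱼ` for every `h > 0`,
and taking the infimum over `h` yields `Re z • ξ ≤ M ξ`. Hence `M ξ ≥ 0` for some nonzero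
`ξ ≥ 0`, which a Hurwitz Metzler matrix `M` forbids: for large `c` the matrix `B = M + c I`
is entrywise nonnegative with `Bᵏ ξ ≥ cᵏ ξ`, so by Gelfand's formula its spectral radius is at
least `c`, whereas every eigenvalue `c + μ` of `B` satisfies `|c + μ| < c` since `Re μ < 0`.
-/

open Matrix Filter Topology

namespace Seminorm

section FiniteDimensional

variable {E F : Type*} [NormedAddCommGroup E] [NormedSpace ℝ E] [NormedAddCommGroup F]
  [NormedSpace ℝ F]

noncomputable def inducedNorm (p : Seminorm ℝ F) (q : Seminorm ℝ E) (f : E →ₗ[ℝ] F) : ℝ :=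
  sSup {c | ∃ v, q v = 1 ∧ c = p (f v)}

theorem inducedNorm_nonneg (p : Seminorm ℝ F) (q : Seminorm ℝ E) (f : E →ₗ[ℝ] F) :
    0 ≤ inducedNorm p q f :=
  Real.sSup_nonneg fun _ ⟨v, _, hc⟩ => hc ▸ apply_nonneg p (f v)

variable [FiniteDimensional ℝ E] [FiniteDimensional ℝ F]

theorem continuous_of_finiteDimensional (p : Seminorm ℝ E) : Continuous p :=
  p.convexOn.locallyLipschitz.continuous

theorem exists_pos_mul_norm_le (p : Seminorm ℝ E) (hp : ∀ x, p x = 0 → x = 0) :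
    ∃ c > 0, ∀ x, c * ‖x‖ ≤ p x := by
  rcases subsingleton_or_nontrivial E with _ | _
  · exact ⟨1, one_pos, fun x => by simp [Subsingleton.elim x 0]⟩
  obtain ⟨u, hu, hmin⟩ := (isCompact_sphere (0 : E) 1).exists_isMinOn
    (NormedSpace.sphere_nonempty.2 zero_le_one) p.continuous_of_finiteDimensional.continuousOn
  have hu0 : u ≠ 0 := ne_zero_of_mem_unit_sphere ⟨u, hu⟩
  refine ⟨p u, (apply_nonneg p u).lt_of_ne' (mt (hp u) hu0), fun x => ?_⟩
  rcases eq_or_ne x 0 with rfl | hx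
  · simp
  have hx' : 0 < ‖x‖ := norm_pos_iff.2 hx
  have hle := hmin (a := ‖x‖⁻¹ • x) (by simp [norm_smul, hx'.ne'])
  rw [Set.mem_ofPred, map_smul_eq_mul, norm_inv, norm_norm, le_inv_mul_iff₀ hx'] at hle
  linarith

theorem isCompact_setOf_eq_one (p : Seminorm ℝ E) (hp : ∀ x, p x = 0 → x = 0) :
    IsCompact {x | p x = 1} := by
  obtain ⟨c, hc, hle⟩ := p.exists_pos_mul_norm_le hp
  refine Metric.isCompact_of_isClosed_isBounded
    (isClosed_eq p.continuous_of_finiteDimensional continuous_const) ?_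
  refine (Metric.isBounded_closedBall (x := 0) (r := c⁻¹)).subset fun x hx => ?_
  rw [mem_closedBall_zero_iff, ← one_div, le_div_iff₀ hc]
  simpa [mul_comm] using (hle x).trans_eq hx

theorem le_inducedNorm_mul (p : Seminorm ℝ F) (q : Seminorm ℝ E) (f : E →ₗ[ℝ] F)
    (hq : ∀ x, q x = 0 → x = 0) (v : E) : p (f v) ≤ inducedNorm p q f * q v := by
  rcases eq_or_ne v 0 with rfl | hv
  · simp
  have hqv : 0 < q v := (apply_nonneg q v).lt_of_ne' (mt (hq v) hv)
  have hbdd : BddAbove {c | ∃ v, q v = 1 ∧ c = p (f v)} := by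
    have hset : {c | ∃ v, q v = 1 ∧ c = p (f v)} = (fun v => p (f v)) '' {v | q v = 1} := by
      ext c
      constructor <;> rintro ⟨v, hv, rfl⟩ <;> exact ⟨v, hv, rfl⟩
    rw [hset]
    exact (q.isCompact_setOf_eq_one hq).bddAbove_image (p.continuous_of_finiteDimensional.comp
      (LinearMap.continuous_of_finiteDimensional f)).continuousOn
  have hmem : p (f ((q v)⁻¹ • v)) ∈ {c | ∃ v, q v = 1 ∧ c = p (f v)} :=
    ⟨_, by rw [map_smul_eq_mul, norm_inv, Real.norm_of_nonneg hqv.le, inv_mul_cancel₀ hqv.ne'], rfl⟩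
  have hle := le_csSup hbdd hmem
  rw [map_smul, map_smul_eq_mul, norm_inv, Real.norm_of_nonneg hqv.le, inv_mul_le_iff₀ hqv] at hle
  rwa [mul_comm]

end FiniteDimensional

section Complexify

variable {ι : Type*} (p : Seminorm ℝ (ι → ℝ))

theorem bddAbove_range_re_circle_mul (u : ι → ℂ) :
    BddAbove (Set.range fun w : Circle => p fun a => (w * u a).re) := by
  refine ⟨p (fun a => (u a).re) + p (fun a => (u a).im), ?_⟩
  rintro _ ⟨w, rfl⟩
  have hvec : (fun a => ((w : ℂ) * u a).re)
      = (w : ℂ).re • (fun a => (u a).re) - (w : ℂ).im • (fun a => (u a).im) := by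
    ext a; simp [Complex.mul_re]
  have hre : |(w : ℂ).re| ≤ 1 := (Complex.abs_re_le_norm _).trans_eq (Circle.norm_coe w)
  have him : |(w : ℂ).im| ≤ 1 := (Complex.abs_im_le_norm _).trans_eq (Circle.norm_coe w)
  calc p (fun a => ((w : ℂ) * u a).re)
      ≤ |(w : ℂ).re| * p (fun a => (u a).re) + |(w : ℂ).im| * p (fun a => (u a).im) := by
        rw [hvec]
        refine (map_sub_le_add p _ _).trans_eq ?_
        simp only [map_smul_eq_mul, Real.norm_eq_abs]
    _ ≤ p (fun a => (u a).re) + p (fun a => (u a).im) := by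
        gcongr
        exacts [mul_le_of_le_one_left (apply_nonneg _ _) hre,
          mul_le_of_le_one_left (apply_nonneg _ _) him]

theorem iSup_re_circle_mul_add_le (u v : ι → ℂ) :
    ⨆ w : Circle, p (fun a => (w * (u + v) a).re) ≤
      (⨆ w : Circle, p fun a => (w * u a).re) + ⨆ w : Circle, p fun a => (w * v a).re := by
  refine ciSup_le fun w => ?_
  have hvec : (fun a => (w * (u + v) a).re) = (fun a => (w * u a).re) + fun a => (w * v a).re := by
    ext a; simp [mul_add]
  rw [hvec]
  exact (map_add_le_add p _ _).trans (add_le_add (le_ciSup (p.bddAbove_range_re_circle_mul u) w)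
    (le_ciSup (p.bddAbove_range_re_circle_mul v) w))

theorem iSup_re_circle_mul_smul (c : ℂ) (u : ι → ℂ) :
    ⨆ w : Circle, p (fun a => (w * (c • u) a).re) =
      ‖c‖ * ⨆ w : Circle, p fun a => (w * u a).re := by
  rcases eq_or_ne c 0 with rfl | hc
  · simp only [zero_smul, Pi.zero_apply, mul_zero, Complex.zero_re]
    rw [show (fun _ : ι => (0 : ℝ)) = 0 from rfl, map_zero, norm_zero, zero_mul, ciSup_const]
  -- With `c = ‖c‖ g` and `|g| = 1`, the map `w ↦ w g` permutes the circle.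
  set g : Circle := Circle.exp (Complex.arg c)
  have hg : c = ‖c‖ * g := by rw [Circle.coe_exp, Complex.norm_mul_exp_arg_mul_I]
  have hrot (w : Circle) :
      p (fun a => (w * (c • u) a).re) = ‖c‖ * p fun a => ((w * g : Circle) * u a).re := by
    have hvec : (fun a => (w * (c • u) a).re) = ‖c‖ • fun a => ((w * g : Circle) * u a).re := by
      ext a
      have hmul : (w : ℂ) * (c * u a) = ‖c‖ * ((w * g : Circle) * u a) := by
        rw [Circle.coe_mul]; nth_rewrite 1 [hg]; ring
      rw [Pi.smul_apply, Pi.smul_apply, smul_eq_mul, hmul, Complex.re_ofReal_mul, smul_eq_mul]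
    rw [hvec, map_smul_eq_mul, norm_norm]
  simp_rw [hrot]
  rw [← Real.mul_iSup_of_nonneg (norm_nonneg c)]
  congr 1
  exact (Equiv.mulRight g).surjective.iSup_comp fun w : Circle => p fun a => (w * u a).re

noncomputable def complexify : Seminorm ℂ (ι → ℂ) :=
  Seminorm.of (fun u => ⨆ w : Circle, p fun a => (w * u a).re) p.iSup_re_circle_mul_add_le
    p.iSup_re_circle_mul_smul

theorem le_complexify (w : Circle) (u : ι → ℂ) : p (fun a => (w * u a).re) ≤ p.complexify u :=
  le_ciSup (p.bddAbove_range_re_circle_mul u) w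

theorem le_complexify_re (u : ι → ℂ) : p (fun a => (u a).re) ≤ p.complexify u := by
  simpa using p.le_complexify 1 u

theorem le_complexify_im (u : ι → ℂ) : p (fun a => (u a).im) ≤ p.complexify u := by
  have h := p.le_complexify_re (-Complex.I • u)
  rw [map_smul_eq_mul, norm_neg, Complex.norm_I, one_mul] at h
  simpa using h

theorem eq_zero_of_complexify_eq_zero (hp : ∀ x, p x = 0 → x = 0) {u : ι → ℂ}
    (hu : p.complexify u = 0) : u = 0 := by
  have hre := hp _ (le_antisymm ((p.le_complexify_re u).trans hu.le) (apply_nonneg _ _))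
  have him := hp _ (le_antisymm ((p.le_complexify_im u).trans hu.le) (apply_nonneg _ _))
  ext a
  exact Complex.ext (congrFun hre a) (congrFun him a)

theorem complexify_map_mulVec_le {κ : Type*} [Fintype ι] [Fintype κ] (q : Seminorm ℝ (κ → ℝ))
    (hq : ∀ x, q x = 0 → x = 0) (B : Matrix ι κ ℝ) (u : κ → ℂ) :
    p.complexify (B.map (↑) *ᵥ u) ≤ inducedNorm p q B.mulVecLin * q.complexify u := by
  refine ciSup_le fun w => ?_
  have hvec : (fun a => ((w : ℂ) * (B.map (↑) *ᵥ u) a).re) = B *ᵥ fun b => (w * u b).re := by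
    ext a
    simp only [mulVec, dotProduct, map_apply, Finset.mul_sum, Complex.re_sum]
    refine Finset.sum_congr rfl fun b _ => ?_
    rw [mul_left_comm, Complex.re_ofReal_mul]
  rw [hvec]
  exact (le_inducedNorm_mul p q B.mulVecLin hq _).trans
    (mul_le_mul_of_nonneg_left (q.le_complexify w u) (inducedNorm_nonneg _ _ _))

end Complexify

theorem one_add_mul_re_mul_complexify_le {ι : Type*} [Fintype ι] [DecidableEq ι]
    {κ : ι → Type*} [∀ i, Fintype (κ i)] [∀ i, DecidableEq (κ i)]
    (P : ∀ i, Seminorm ℝ (κ i → ℝ)) (hP : ∀ i x, P i x = 0 → x = 0)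
    (B : ∀ i j, Matrix (κ i) (κ j) ℝ) (u : ∀ i, κ i → ℂ) {z : ℂ} {i : ι}
    (hrow : ∑ j, (B i j).map (↑) *ᵥ u j = z • u i) {h : ℝ} (hh : 0 ≤ h) :
    (1 + h * z.re) * (P i).complexify (u i) ≤
      inducedNorm (P i) (P i) (1 + h • B i i).mulVecLin * (P i).complexify (u i) +
        h * ∑ j ∈ Finset.univ.erase i,
          inducedNorm (P i) (P j) (B i j).mulVecLin * (P j).complexify (u j) := by
  have hsplit : (1 + h * z) • u i = (1 + h • B i i).map (↑) *ᵥ u i +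
      (h : ℂ) • ∑ j ∈ Finset.univ.erase i, (B i j).map (↑) *ᵥ u j := by
    rw [← Finset.add_sum_erase _ _ (Finset.mem_univ i)] at hrow
    have hdiag : (1 + h • B i i).map ((↑) : ℝ → ℂ) = 1 + (h : ℂ) • (B i i).map (↑) := by
      ext a b
      by_cases hab : a = b <;> simp [one_apply, hab]
    rw [hdiag, add_mulVec, one_mulVec, smul_mulVec, add_assoc, ← smul_add, hrow, smul_smul,
      add_smul, one_smul]
  calc (1 + h * z.re) * (P i).complexify (u i)
      ≤ ‖1 + h * z‖ * (P i).complexify (u i) := by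
        gcongr
        simpa using Complex.re_le_norm (1 + h * z)
    _ = (P i).complexify ((1 + h * z) • u i) := (map_smul_eq_mul _ _ _).symm
    _ ≤ _ := by
        rw [hsplit]
        refine (map_add_le_add _ _ _).trans (add_le_add ?_ ?_)
        · exact complexify_map_mulVec_le _ _ (hP i) _ _
        · rw [map_smul_eq_mul, Complex.norm_real, Real.norm_of_nonneg hh]
          refine mul_le_mul_of_nonneg_left ?_ hh
          refine (Finset.le_sum_of_subadditive _ (map_zero _).le (map_add_le_add _) _ _).trans ?_
          exact Finset.sum_le_sum fun j _ => complexify_map_mulVec_le _ _ (hP j) _ _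

end Seminorm

theorem mul_le_iInf_div_mul_add {a ξ S : ℝ} {f : ℝ → ℝ} (hξ : 0 ≤ ξ)
    (hf : ∀ h, 0 < h → (1 + h * a) * ξ ≤ f h * ξ + h * S) :
    a * ξ ≤ (⨅ h : {h : ℝ // 0 < h}, (f h - 1) / h) * ξ + S := by
  rcases hξ.eq_or_lt with rfl | hξ
  · simpa using hf 1 one_pos
  have : Nonempty {h : ℝ // 0 < h} := ⟨⟨1, one_pos⟩⟩
  have hle : (a * ξ - S) / ξ ≤ ⨅ h : {h : ℝ // 0 < h}, (f h - 1) / h :=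
    le_ciInf fun ⟨h, hh⟩ => by
      rw [div_le_div_iff₀ hξ hh]
      nlinarith [hf h hh]
  rw [div_le_iff₀ hξ] at hle
  linarith

theorem ofReal_le_spectralRadius_of_mul_pow_le_norm_pow {A : Type*} [NormedRing A]
    [NormedAlgebra ℂ A] [CompleteSpace A] (a : A) {C R : ℝ} (hC : 0 < C) (hR : 0 ≤ R)
    (h : ∀ k : ℕ, C * R ^ k ≤ ‖a ^ k‖) : ENNReal.ofReal R ≤ spectralRadius ℂ a := by
  have hroot : Tendsto (fun k : ℕ => C ^ (1 / k : ℝ) * R) atTop (𝓝 R) := by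
    simpa using ((Real.continuousAt_const_rpow hC.ne').tendsto.comp
      (tendsto_const_div_atTop_nhds_zero_nat 1)).mul_const R
  refine le_of_tendsto_of_tendsto (ENNReal.tendsto_ofReal hroot)
    (spectrum.pow_norm_pow_one_div_tendsto_nhds_spectralRadius a) ?_
  filter_upwards [eventually_ge_atTop 1] with k hk
  refine ENNReal.ofReal_le_ofReal ?_
  calc C ^ (1 / k : ℝ) * R = (C * R ^ k) ^ (1 / k : ℝ) := by
        rw [Real.mul_rpow hC.le (by positivity), one_div, Real.pow_rpow_inv_natCast hR (by omega)]
    _ ≤ ‖a ^ k‖ ^ (1 / k : ℝ) := by gcongr; exact h k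

theorem spectralRadius_algebraMap_add_lt {A : Type*} [NormedRing A] [NormedAlgebra ℂ A]
    [CompleteSpace A] [Nontrivial A] (a : A) {c : ℝ} (h : ∀ μ ∈ spectrum ℂ a, ‖(c : ℂ) + μ‖ < c) :
    spectralRadius ℂ (algebraMap ℂ A c + a) < ENNReal.ofReal c := by
  refine spectrum.spectralRadius_lt_of_forall_lt _ fun z hz => ?_
  have hlt := h _ (spectrum.add_mem_add_iff.mp (by rwa [sub_add_cancel]) : z - c ∈ spectrum ℂ a)
  rw [add_sub_cancel] at hlt
  rwa [← NNReal.coe_lt_coe, coe_nnnorm, Real.coe_toNNReal _ ((norm_nonneg _).trans hlt.le)]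

theorem Complex.eventually_norm_ofReal_add_lt {μ : ℂ} (hμ : μ.re < 0) :
    ∀ᶠ c : ℝ in atTop, ‖(c : ℂ) + μ‖ < c := by
  filter_upwards [eventually_gt_atTop (‖μ‖ ^ 2 / (-2 * μ.re)), eventually_gt_atTop 0] with c hc hc0
  rw [div_lt_iff₀ (by linarith)] at hc
  refine lt_of_pow_lt_pow_left₀ 2 hc0.le ?_
  rw [Complex.sq_norm, Complex.normSq_apply] at hc ⊢
  simp only [Complex.add_re, Complex.add_im, Complex.ofReal_re, Complex.ofReal_im, zero_add]
  linarith

namespace Matrix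

def IsMetzler {ι : Type*} (M : Matrix ι ι ℝ) : Prop := ∀ i j, i ≠ j → 0 ≤ M i j

def IsHurwitz {ι : Type*} [Fintype ι] [DecidableEq ι] (M : Matrix ι ι ℝ) : Prop :=
  ∀ z ∈ spectrum ℂ (M.map ((↑) : ℝ → ℂ)), z.re < 0

theorem mulVec_mono_of_nonneg {R ι κ : Type*} [Semiring R] [PartialOrder R] [IsOrderedRing R]
    [Fintype κ] {B : Matrix ι κ R} (hB : ∀ i j, 0 ≤ B i j) : Monotone (B *ᵥ ·) :=
  fun _ _ hxy i => Finset.sum_le_sum fun j _ => mul_le_mul_of_nonneg_left (hxy j) (hB i j)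

theorem pow_smul_le_pow_mulVec {R ι : Type*} [CommSemiring R] [PartialOrder R] [IsOrderedRing R]
    [Fintype ι] [DecidableEq ι] {B : Matrix ι ι R} (hB : ∀ i j, 0 ≤ B i j) {c : R} (hc : 0 ≤ c)
    {ξ : ι → R} (hξ : c • ξ ≤ B *ᵥ ξ) (k : ℕ) : c ^ k • ξ ≤ B ^ k *ᵥ ξ := by
  induction k with
  | zero => simp
  | succ k ih =>
    calc c ^ (k + 1) • ξ = c ^ k • c • ξ := by rw [pow_succ, mul_smul]
      _ ≤ c ^ k • (B *ᵥ ξ) := smul_le_smul_of_nonneg_left hξ (pow_nonneg hc k)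
      _ = B *ᵥ (c ^ k • ξ) := (mulVec_smul _ _ _).symm
      _ ≤ B *ᵥ (B ^ k *ᵥ ξ) := mulVec_mono_of_nonneg hB ih
      _ = B ^ (k + 1) *ᵥ ξ := by rw [mulVec_mulVec, pow_succ']

theorem exists_mulVec_eq_smul_of_mem_spectrum {K n : Type*} [Field K] [Fintype n] [DecidableEq n]
    {A : Matrix n n K} {z : K} (hz : z ∈ spectrum K A) : ∃ v ≠ 0, A *ᵥ v = z • v := by
  rw [← spectrum_toLin', ← Module.End.hasEigenvalue_iff_mem_spectrum] at hz
  obtain ⟨v, hv⟩ := hz.exists_hasEigenvector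
  exact ⟨v, hv.2, by simpa using hv.apply_eq_smul⟩

theorem mulVec_sigma_eq_sum {R ι : Type*} [NonUnitalNonAssocSemiring R] [Fintype ι]
    {κ : ι → Type*} [∀ i, Fintype (κ i)] {A : Matrix (Σ i, κ i) (Σ i, κ i) R}
    {B : ∀ i j, Matrix (κ i) (κ j) R} (hB : ∀ i j a b, B i j a b = A ⟨i, a⟩ ⟨j, b⟩)
    (v : (Σ i, κ i) → R) (i : ι) :
    (fun a => (A *ᵥ v) ⟨i, a⟩) = ∑ j, B i j *ᵥ fun b => v ⟨j, b⟩ := by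
  ext a
  simp only [mulVec, dotProduct, Finset.sum_apply, hB]
  exact Fintype.sum_sigma _

section LinftyOpNorm

attribute [local instance] Matrix.linftyOpNormedRing Matrix.linftyOpNormedAlgebra

variable {ι : Type*} [Fintype ι] [DecidableEq ι]

theorem exists_pos_mul_pow_le_norm_map_pow {B : Matrix ι ι ℝ} (hB : ∀ i j, 0 ≤ B i j) {c : ℝ}
    (hc : 0 ≤ c) {ξ : ι → ℝ} (hξ : c • ξ ≤ B *ᵥ ξ) {i : ι} (hi : 0 < ξ i) :
    ∃ C > 0, ∀ k : ℕ, C * c ^ k ≤ ‖(B.map (↑) : Matrix ι ι ℂ) ^ k‖ := by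
  set ξc : ι → ℂ := fun j => ξ j
  have hξc : 0 < ‖ξc‖ := norm_pos_iff.2 fun h => by simpa [ξc, hi.ne'] using congrFun h i
  refine ⟨ξ i / ‖ξc‖, by positivity, fun k => ?_⟩
  have hentry : ((B ^ k *ᵥ ξ) i : ℂ) = ((B.map (↑) : Matrix ι ι ℂ) ^ k *ᵥ ξc) i := by
    have hpow : (B.map ((↑) : ℝ → ℂ)) ^ k = (B ^ k).map (↑) :=
      (map_pow Complex.ofRealHom.mapMatrix B k).symm
    rw [hpow]
    exact RingHom.map_mulVec Complex.ofRealHom _ _ _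
  calc ξ i / ‖ξc‖ * c ^ k = c ^ k * ξ i / ‖ξc‖ := by ring
    _ ≤ ‖((B.map (↑) : Matrix ι ι ℂ) ^ k *ᵥ ξc) i‖ / ‖ξc‖ := by
        rw [← hentry, Complex.norm_real, Real.norm_eq_abs]
        gcongr
        exact (pow_smul_le_pow_mulVec hB hc hξ k i).trans (le_abs_self _)
    _ ≤ ‖(B.map (↑) : Matrix ι ι ℂ) ^ k *ᵥ ξc‖ / ‖ξc‖ := by gcongr; exact norm_le_pi_norm _ i
    _ ≤ ‖(B.map (↑) : Matrix ι ι ℂ) ^ k‖ := by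
        rw [div_le_iff₀ hξc]; exact linfty_opNorm_mulVec _ _

theorem IsHurwitz.not_nonneg_mulVec {M : Matrix ι ι ℝ} (hH : M.IsHurwitz) (hM : M.IsMetzler)
    {ξ : ι → ℝ} (hξ : 0 ≤ ξ) (hξ0 : ξ ≠ 0) : ¬ 0 ≤ M *ᵥ ξ := by
  intro hMξ
  obtain ⟨i, hi⟩ := Function.ne_iff.mp hξ0
  have : Nonempty ι := ⟨i⟩
  have hdiag : ∀ᶠ c in atTop, ∀ j, -M j j ≤ c := eventually_all.2 fun j => eventually_ge_atTop _
  have hspec : ∀ᶠ c : ℝ in atTop, ∀ μ ∈ spectrum ℂ (M.map ((↑) : ℝ → ℂ)), ‖(c : ℂ) + μ‖ < c :=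
    (eventually_all_finite (finite_spectrum _)).2 fun μ hμ =>
      Complex.eventually_norm_ofReal_add_lt (hH μ hμ)
  obtain ⟨c, hc, hdiag, hspec⟩ := ((eventually_gt_atTop 0).and (hdiag.and hspec)).exists
  set B := M + c • 1
  have hB : ∀ j k, 0 ≤ B j k := by
    intro j k
    rcases eq_or_ne j k with rfl | hjk
    · simp only [B, add_apply, smul_apply, one_apply_eq, smul_eq_mul, mul_one]
      linarith [hdiag j]
    · simp [B, hjk, hM j k hjk]
  have hBξ : c • ξ ≤ B *ᵥ ξ := by
    rw [add_mulVec, smul_mulVec, one_mulVec]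
    exact le_add_of_nonneg_left hMξ
  obtain ⟨C, hC, hpow⟩ := exists_pos_mul_pow_le_norm_map_pow hB hc.le hBξ ((hξ i).lt_of_ne' hi)
  have hmap : (B.map (↑) : Matrix ι ι ℂ) = algebraMap ℂ _ c + M.map (↑) := by
    ext j k
    rcases eq_or_ne j k with rfl | hjk
    · simp only [B, map_apply, add_apply, smul_apply, one_apply_eq, smul_eq_mul, mul_one,
        Complex.ofReal_add, algebraMap_eq_diagonal, diagonal_apply_eq, Pi.algebraMap_apply,
        Algebra.algebraMap_self, RingHom.id_apply]
      ring
    · simp [B, algebraMap_eq_diagonal, hjk]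
  have hle := ofReal_le_spectralRadius_of_mul_pow_le_norm_pow _ hC hc.le hpow
  rw [hmap] at hle
  exact (hle.trans_lt (spectralRadius_algebraMap_add_lt _ hspec)).false

end LinftyOpNorm

end Matrix

/-- Hurwitzness transfer from the aggregate Metzler majorant: given a block-partitioned
real matrix A (blocks A_{ij} ∈ ℝ^{n_i×n_j}), norms N_i on each ℝ^{n_i}, the induced
operator norms opN i j between blocks, and the induced logarithmic norms μ_i on the
diagonal blocks, if the r×r aggregate Metzler majorant M (with M_{ii} = μ_i(A_{ii}) and
M_{ij} = ‖A_{ij}‖_{ij} for i ≠ j) is Hurwitz, then A is Hurwitz. -/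
theorem aggregate_majorant_hurwitz {r : ℕ} (n : Fin r → ℕ)
    (A : Matrix ((i : Fin r) × Fin (n i)) ((i : Fin r) × Fin (n i)) ℝ)
    (N : ∀ i, (Fin (n i) → ℝ) → ℝ)
    (hN_add : ∀ i x y, N i (x + y) ≤ N i x + N i y)
    (hN_smul : ∀ i (c : ℝ) x, N i (c • x) = |c| * N i x)
    (hN_zero : ∀ i x, N i x = 0 ↔ x = 0)
    (Ablk : ∀ i j, Matrix (Fin (n i)) (Fin (n j)) ℝ)
    (hblk : ∀ i j (a : Fin (n i)) (b : Fin (n j)), Ablk i j a b = A ⟨i, a⟩ ⟨j, b⟩)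
    (opN : ∀ i j, Matrix (Fin (n i)) (Fin (n j)) ℝ → ℝ)
    (hopN : ∀ i j B, opN i j B = sSup {c | ∃ v, N j v = 1 ∧ c = N i (B.mulVec v)})
    (mu : ∀ i, Matrix (Fin (n i)) (Fin (n i)) ℝ → ℝ)
    (hmu : ∀ i B, mu i B = ⨅ h : {h : ℝ // 0 < h}, (opN i i (1 + h.1 • B) - 1) / h.1)
    (M : Matrix (Fin r) (Fin r) ℝ)
    (hM : ∀ i j, M i j = if hij : i = j then mu i (Ablk i i) else opN i j (Ablk i j))
    (hHurwitz : ∀ z ∈ spectrum ℂ (M.map Complex.ofReal), z.re < 0) :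
    ∀ z ∈ spectrum ℂ (A.map Complex.ofReal), z.re < 0 := by
  intro z hz
  by_contra! hre
  let P i : Seminorm ℝ (Fin (n i) → ℝ) :=
    Seminorm.of (N i) (hN_add i) fun c x => by rw [hN_smul, Real.norm_eq_abs]
  have hP i x : P i x = 0 → x = 0 := (hN_zero i x).1
  have hop : ∀ i j B, opN i j B = Seminorm.inducedNorm (P i) (P j) B.mulVecLin := hopN
  obtain ⟨v, hv0, hv⟩ := Matrix.exists_mulVec_eq_smul_of_mem_spectrum hz
  set u : ∀ i, Fin (n i) → ℂ := fun i a => v ⟨i, a⟩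
  have hrow i : ∑ j, (Ablk i j).map (↑) *ᵥ u j = z • u i := by
    refine (Matrix.mulVec_sigma_eq_sum (B := fun i j => (Ablk i j).map (↑)) (A := A.map (↑))
      (fun i j a b => by simp [hblk]) v i).symm.trans ?_
    rw [hv]
    rfl
  set ξ : Fin r → ℝ := fun i => (P i).complexify (u i)
  have hξ0 : ξ ≠ 0 := fun hξ => hv0 <| funext fun ⟨i, a⟩ =>
    congrFun ((P i).eq_zero_of_complexify_eq_zero (hP i) (congrFun hξ i)) a
  have hMξ i : z.re * ξ i ≤ (M *ᵥ ξ) i := by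
    rw [Matrix.mulVec, dotProduct, ← Finset.add_sum_erase _ _ (Finset.mem_univ i), hM, dif_pos rfl,
      hmu, Finset.sum_congr rfl fun j hj => by rw [hM, dif_neg (Finset.ne_of_mem_erase hj).symm]]
    refine mul_le_iInf_div_mul_add (f := fun h => opN i i (1 + h • Ablk i i)) (apply_nonneg _ _)
      fun h hh => ?_
    simp only [hop]
    exact Seminorm.one_add_mul_re_mul_complexify_le P hP Ablk u (hrow i) hh.le
  have hMetzler : M.IsMetzler := fun i j hij => by
    rw [hM, dif_neg hij, hop]
    exact Seminorm.inducedNorm_nonneg _ _ _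
  exact Matrix.IsHurwitz.not_nonneg_mulVec hHurwitz hMetzler (fun i => apply_nonneg _ _) hξ0
    fun i => (mul_nonneg hre (apply_nonneg _ _)).trans (hMξ i)
end

section
/- Let M ∈ ℝ^{n×n} be an irreducible Metzler matrix with spectral abscissa α(M), and let l, r ∈ ℝⁿ be (entrywise positive) left and right Perron eigenvectors of M. For p = 1 define η ∈ ℝⁿ by η_i = l_i. Then the weighted log norm satisfies μ_{1,[diag(η)]}(M) = α(M), where μ_{1,[diag(η)]}(A) := μ_1(diag(η) A diag(η)^{-1}). -/
/-- The spectral abscissa: the supremum of real parts of the complex spectrum. -/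
noncomputable def specAbscissa {k : ℕ} (A : Matrix (Fin k) (Fin k) ℝ) : ℝ :=
  sSup (Complex.re '' spectrum ℂ (A.map Complex.ofReal))

/-- The logarithmic norm induced by the 1-norm: μ_1(B) = max_j (B_jj + Σ_{i≠j} |B_ij|). -/
noncomputable def mu1 {k : ℕ} [DecidableEq (Fin k)] (B : Matrix (Fin k) (Fin k) ℝ) : ℝ :=
  ⨆ j, (B j j + ∑ i ∈ Finset.univ.erase j, |B i j|)

/-! Conjugating by `diagonal l` rescales column `j` of `M` by `l i / l j`, so the column sums of
the conjugate are `(lᵀ M)_j / l_j = α(M)`; a positive diagonal similarity keeps the off-diagonal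
entries nonnegative, and for such a matrix `μ₁` is the largest column sum. -/

open Matrix

section

variable {k : ℕ}

theorem mu1_eq_iSup_colSum_of_offDiag_nonneg (B : Matrix (Fin k) (Fin k) ℝ)
    (hB : ∀ i j, i ≠ j → 0 ≤ B i j) : mu1 B = ⨆ j, ∑ i, B i j := by
  refine iSup_congr fun j => ?_
  have habs : ∀ i ∈ Finset.univ.erase j, |B i j| = B i j := fun i hi =>
    abs_of_nonneg (hB i j (Finset.ne_of_mem_erase hi))
  rw [Finset.sum_congr rfl habs, add_comm, Finset.sum_erase_add _ _ (Finset.mem_univ j)]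

theorem diagonal_mul_mul_diagonal_inv_apply (M : Matrix (Fin k) (Fin k) ℝ) (l : Fin k → ℝ)
    (i j : Fin k) :
    (diagonal l * M * diagonal (fun i => (l i)⁻¹)) i j = l i * M i j / l j := by
  simp [mul_diagonal, diagonal_mul, div_eq_mul_inv]

theorem offDiag_nonneg_diagonal_mul_mul_diagonal_inv {M : Matrix (Fin k) (Fin k) ℝ}
    (hM : ∀ i j, i ≠ j → 0 ≤ M i j) {l : Fin k → ℝ} (hl : ∀ i, 0 < l i) (i j : Fin k)
    (hij : i ≠ j) : 0 ≤ (diagonal l * M * diagonal (fun i => (l i)⁻¹)) i j := by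
  rw [diagonal_mul_mul_diagonal_inv_apply]
  exact div_nonneg (mul_nonneg (hl i).le (hM i j hij)) (hl j).le

theorem colSum_diagonal_mul_mul_diagonal_inv (M : Matrix (Fin k) (Fin k) ℝ) (l : Fin k → ℝ)
    (j : Fin k) :
    ∑ i, (diagonal l * M * diagonal (fun i => (l i)⁻¹)) i j = vecMul l M j / l j := by
  simp only [diagonal_mul_mul_diagonal_inv_apply, ← Finset.sum_div, vecMul, dotProduct]

end

theorem irreducible_metzler_weighted_logNorm_general {n : ℕ} [NeZero n]
    (M : Matrix (Fin n) (Fin n) ℝ)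
    (hMetzler : ∀ i j, i ≠ j → 0 ≤ M i j)
    (l : Fin n → ℝ) (hl : ∀ i, 0 < l i)
    (hleft : Matrix.vecMul l M = specAbscissa M • l) :
    mu1 (Matrix.diagonal l * M * Matrix.diagonal (fun i => (l i)⁻¹)) = specAbscissa M := by
  have hcol : ∀ j, ∑ i, (diagonal l * M * diagonal (fun i => (l i)⁻¹)) i j = specAbscissa M :=
    fun j => by
      rw [colSum_diagonal_mul_mul_diagonal_inv, hleft, Pi.smul_apply, smul_eq_mul,
        mul_div_cancel_right₀ _ (hl j).ne']
  rw [mu1_eq_iSup_colSum_of_offDiag_nonneg _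
    (offDiag_nonneg_diagonal_mul_mul_diagonal_inv hMetzler hl), iSup_congr hcol, ciSup_const]

/-- For an irreducible Metzler matrix M with positive left and right Perron eigenvectors
l and r (for the spectral abscissa α(M)), the weighted log norm with η = l satisfies
μ_{1,[diag(η)]}(M) = μ_1(diag(η) M diag(η)⁻¹) = α(M). -/
theorem irreducible_metzler_weighted_logNorm {n : ℕ} [NeZero n]
    (M : Matrix (Fin n) (Fin n) ℝ)
    (hMetzler : ∀ i j, i ≠ j → 0 ≤ M i j)
    (hirr : ∀ i j : Fin n, Relation.ReflTransGen (fun a b => a ≠ b ∧ M a b ≠ 0) i j)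
    (l r : Fin n → ℝ) (hl : ∀ i, 0 < l i) (hr : ∀ i, 0 < r i)
    (hleft : Matrix.vecMul l M = specAbscissa M • l)
    (hright : M.mulVec r = specAbscissa M • r) :
    mu1 (Matrix.diagonal l * M * Matrix.diagonal (fun i => (l i)⁻¹)) = specAbscissa M :=
  irreducible_metzler_weighted_logNorm_general M hMetzler l hl hleft
end
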